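/- The map sending a permutation to its sequence of ascending runs (viewed as sets in order of appearance) is a bijection between pop-stacked permutations of [n] and overlapping ballots of [n], i.e., ordered set partitions B₁B₂⋯B_k of [n] such that for all i < k, max Bᵢ > min Bᵢ₊₁ and min Bᵢ < max Bᵢ₊₁. -/

import Mathlib

/-
The ascending runs of a word form its unique decomposition into maximal increasing blocks.
Hence a word is determined by its runs, and a ballot whose adjacent blocks satisfy
`min Bᵢ₊₁ < max Bᵢ` is exactly the run decomposition of the word listing each block in
increasing order. The other condition, `min Bᵢ < max Bᵢ₊₁`, characterises the image of the
pop-stack operator `P`. If `σ = P π`, then `σ` is the concatenation of the reversals `Dᵢʳ` of the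
descending runs of `π`; these are increasing blocks, and `min Dᵢʳ < max Dᵢ₊₁ʳ` because
consecutive descending runs meet at an ascent. Every ascending run of `σ` is a union of
consecutive blocks `Dᵢʳ`, and merging preserves the inequality. Conversely, if the ascending
runs of `σ` satisfy it, reversing each run gives a word whose descending runs are exactly these
reversals, so `P` maps it back to `σ`.
-/

/-- The maximal descending runs of a list, in order. -/
def descRuns : List ℕ → List (List ℕ)
  | [] => []
  | a :: l =>
    match descRuns l with
    | (b :: r) :: rs => if b < a then (a :: b :: r) :: rs else [a] :: (b :: r) :: rs
    | _ => [[a]]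

/-- The maximal ascending runs of a list, in order. -/
def ascRuns : List ℕ → List (List ℕ)
  | [] => []
  | a :: l =>
    match ascRuns l with
    | (b :: r) :: rs => if a < b then (a :: b :: r) :: rs else [a] :: (b :: r) :: rs
    | _ => [[a]]

/-- The pop-stack operator: reverse each maximal descending run. -/
def popStack (l : List ℕ) : List ℕ := ((descRuns l).map List.reverse).flatten

/-- `l` is (the one-line notation of) a permutation of `[n] = {1,…,n}`. -/
def IsPermOf (n : ℕ) (l : List ℕ) : Prop := l.Perm (List.range' 1 n)

/-- Minimum of a list of naturals. -/
noncomputable def lmin (l : List ℕ) : ℕ := sInf {x | x ∈ l}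

/-- Maximum of a list of naturals. -/
def lmax (l : List ℕ) : ℕ := l.foldr max 0

/-- Minimum of a finset of naturals. -/
noncomputable def bmin (B : Finset ℕ) : ℕ := sInf (B : Set ℕ)

/-- Maximum of a finset of naturals. -/
def bmax (B : Finset ℕ) : ℕ := B.sup id

/-- A ballot (ordered set partition) with underlying set `U`. -/
def IsBallot (U : Finset ℕ) (l : List (Finset ℕ)) : Prop :=
  (∀ B ∈ l, B.Nonempty) ∧ l.Pairwise Disjoint ∧ l.foldr (· ∪ ·) ∅ = U

/-- A ballot is overlapping if adjacent blocks satisfy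
`max Bᵢ > min Bᵢ₊₁` and `min Bᵢ < max Bᵢ₊₁`. -/
def Overlapping (l : List (Finset ℕ)) : Prop :=
  l.Chain' fun B C => bmin C < bmax B ∧ bmin B < bmax C

/-- `σ` is pop-stacked: it is the image of some permutation of `[n]` under `popStack`. -/
def IsPopStacked (n : ℕ) (σ : List ℕ) : Prop :=
  ∃ π, IsPermOf n π ∧ popStack π = σ

/-- `f_{c,d}(n)`: overlapping ballots of `[n]` whose last block has min `c` and max `d`. -/
noncomputable def fcd (c d n : ℕ) : ℕ :=
  Nat.card {l : List (Finset ℕ) // IsBallot (Finset.Icc 1 n) l ∧ Overlapping l ∧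
    ∃ B, l.getLast? = some B ∧ bmin B = c ∧ bmax B = d}

/-- `f_{c,d}(n,k)`: overlapping ballots of `[n]` with `k` blocks whose last block has
min `c` and max `d`. -/
noncomputable def fcdk (c d n k : ℕ) : ℕ :=
  Nat.card {l : List (Finset ℕ) // IsBallot (Finset.Icc 1 n) l ∧ Overlapping l ∧
    l.length = k ∧ ∃ B, l.getLast? = some B ∧ bmin B = c ∧ bmax B = d}

/-- The number of pop-stacked permutations of `[n]`. -/
noncomputable def popCount (n : ℕ) : ℕ :=
  Nat.card {σ : List ℕ // IsPermOf n σ ∧ IsPopStacked n σ}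

/-- The number of pop-stacked permutations of `[n]` with exactly `k` ascending runs. -/
noncomputable def popCountK (n k : ℕ) : ℕ :=
  Nat.card {σ : List ℕ // IsPermOf n σ ∧ IsPopStacked n σ ∧ (ascRuns σ).length = k}

/-- Greedy sorting with a pop-stack whose contents increase from top to bottom:
push when possible, otherwise pop the whole stack. -/
def greedyPop : List ℕ → List ℕ → List ℕ
  | stack, [] => stack
  | [], a :: rest => greedyPop [a] rest
  | t :: s, a :: rest =>
    if a < t then greedyPop (a :: t :: s) rest
    else (t :: s) ++ greedyPop [a] rest

namespace List

variable {α : Type*}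

theorem IsChain.and {R S : α → α → Prop} {l : List α} (hR : l.IsChain R) (hS : l.IsChain S) :
    l.IsChain fun a b => R a b ∧ S a b := by
  induction hR with
  | nil => exact .nil
  | singleton a => exact .singleton a
  | cons_cons hr _ ih => exact .cons_cons ⟨hr, hS.rel⟩ (ih hS.of_cons)

variable [Inhabited α]

theorem getLast!_cons_cons (a b : α) (l : List α) :
    (a :: b :: l).getLast! = (b :: l).getLast! := by
  simp

theorem getLast!_append (r : List α) {s : List α} (hs : s ≠ []) :
    (r ++ s).getLast! = s.getLast! := by
  simp [getLast?_append, getLast?_eq_some_getLast hs]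

theorem getLast!_mem_self {l : List α} (h : l ≠ []) : l.getLast! ∈ l := by
  rw [getLast!_eq_getLast?_getD, getLast?_eq_some_getLast h]
  exact getLast_mem h

theorem head!_reverse (l : List α) : l.reverse.head! = l.getLast! := by
  simp [head!_eq_head?_getD]

theorem getLast!_reverse (l : List α) : l.reverse.getLast! = l.head! := by
  simp [head!_eq_head?_getD]

theorem isChain_getLast!_ne_head! {rs : List (List α)} (hne : ∀ r ∈ rs, r ≠ [])
    (hnd : rs.flatten.Nodup) : rs.IsChain fun r s => r.getLast! ≠ s.head! := by
  refine (nodup_flatten.1 hnd).2.isChain.imp_of_mem_imp fun r s hr hs hrs heq => ?_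
  exact hrs (getLast!_mem_self (hne r hr)) (heq ▸ head!_mem_self (hne s hs))

section LinearOrder

variable [LinearOrder α] {l : List α} {a : α}

theorem IsChain.head!_le (h : l.IsChain (· < ·)) (ha : a ∈ l) : l.head! ≤ a :=
  (h.pairwise.imp le_of_lt).head!_le ha

theorem IsChain.le_getLast! (h : l.IsChain (· < ·)) (ha : a ∈ l) : a ≤ l.getLast! := by
  have := (pairwise_reverse.2 (h.pairwise.imp le_of_lt)).head!_le (R := (· ≥ ·))
    (mem_reverse.2 ha)
  rwa [head!_reverse] at this

theorem IsChain.head!_le_getLast! (h : l.IsChain (· < ·)) (hl : l ≠ []) :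
    l.head! ≤ l.getLast! :=
  h.le_getLast! (head!_mem_self hl)

end LinearOrder

end List

open List

section Runs

variable {α : Type*} (R : α → α → Prop) [DecidableRel R]

def runs : List α → List (List α)
  | [] => []
  | a :: l =>
    match runs l with
    | (b :: r) :: rs => if R a b then (a :: b :: r) :: rs else [a] :: (b :: r) :: rs
    | _ => [[a]]

theorem ascRuns_eq_runs (l : List ℕ) : ascRuns l = runs (· < ·) l := by
  induction l with
  | nil => rfl
  | cons a l ih =>
    rw [ascRuns, runs, ih]
    rcases runs _ l with _ | ⟨_ | ⟨b, r⟩, rs⟩ <;> rfl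

theorem descRuns_eq_runs (l : List ℕ) : descRuns l = runs (· > ·) l := by
  induction l with
  | nil => rfl
  | cons a l ih =>
    rw [descRuns, runs, ih]
    rcases runs _ l with _ | ⟨_ | ⟨b, r⟩, rs⟩ <;> rfl

variable {R}

theorem runs_cons_of_eq_cons {a b : α} {l t : List α} {rs : List (List α)}
    (h : runs R l = (b :: t) :: rs) :
    runs R (a :: l) = if R a b then (a :: b :: t) :: rs else [a] :: (b :: t) :: rs := by
  simp only [runs, h]

variable [Inhabited α]

variable (R) in
def IsMaximalRuns (rs : List (List α)) : Prop :=
  (∀ r ∈ rs, r ≠ [] ∧ r.IsChain R) ∧ rs.IsChain fun r s => ¬ R r.getLast! s.head!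

theorem isMaximalRuns_runs (l : List α) : IsMaximalRuns R (runs R l) := by
  induction l with
  | nil => simp [IsMaximalRuns, runs]
  | cons a l ih =>
    rcases h : runs R l with _ | ⟨_ | ⟨b, t⟩, rs⟩
    · simp [IsMaximalRuns, runs, h]
    · simp [h, IsMaximalRuns] at ih
    · rw [h] at ih
      obtain ⟨hblocks, hbound⟩ := ih
      have hbt := hblocks _ mem_cons_self
      rw [runs_cons_of_eq_cons h]
      split_ifs with hab
      · refine ⟨?_, hbound.cons_of_imp fun c hc => by rwa [getLast!_cons_cons]⟩
        rintro r (_ | ⟨_, hr⟩)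
        · exact ⟨cons_ne_nil _ _, hbt.2.cons_cons hab⟩
        · exact hblocks r (mem_cons_of_mem _ hr)
      · refine ⟨?_, hbound.cons_cons (by simpa using hab)⟩
        rintro r (_ | ⟨_, hr⟩)
        · exact ⟨cons_ne_nil _ _, .singleton a⟩
        · exact hblocks r hr

theorem flatten_runs (l : List α) : (runs R l).flatten = l := by
  induction l with
  | nil => rfl
  | cons a l ih =>
    rcases h : runs R l with _ | ⟨_ | ⟨b, t⟩, rs⟩
    · simp_all [runs]
    · simpa [h, IsMaximalRuns] using isMaximalRuns_runs (R := R) l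
    · rw [runs_cons_of_eq_cons h]
      rw [h] at ih
      split_ifs <;> simp [← ih]

theorem runs_append_of_not_rel {r m : List α} (hr : r ≠ []) (hc : r.IsChain R)
    (hm : ∀ s ∈ (runs R m).head?, ¬ R r.getLast! s.head!) :
    runs R (r ++ m) = r :: runs R m := by
  induction r with
  | nil => exact absurd rfl hr
  | cons a t ih =>
    rcases t with _ | ⟨c, t⟩
    · rcases h : runs R m with _ | ⟨_ | ⟨b, u⟩, rs⟩
      · simp [runs, h]
      · simpa [h, IsMaximalRuns] using isMaximalRuns_runs (R := R) m
      · rw [h] at hm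
        rw [singleton_append, runs_cons_of_eq_cons h, if_neg (by simpa using hm)]
    · have ih' := ih (cons_ne_nil _ _) hc.of_cons (by simpa only [getLast!_cons_cons] using hm)
      rw [cons_append, runs_cons_of_eq_cons ih', if_pos (isChain_cons_cons.1 hc).1]

theorem runs_flatten {rs : List (List α)} (h : IsMaximalRuns R rs) : runs R rs.flatten = rs := by
  induction rs with
  | nil => rfl
  | cons r rs ih =>
    obtain ⟨hblocks, hbound⟩ := h
    have ih' := ih ⟨fun s hs => hblocks s (mem_cons_of_mem _ hs), hbound.of_cons⟩
    obtain ⟨hr, hc⟩ := hblocks r mem_cons_self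
    rw [flatten_cons, runs_append_of_not_rel hr hc (by rw [ih']; exact hbound.rel_head?), ih']

theorem runs_eq_iff {l : List α} {rs : List (List α)} :
    runs R l = rs ↔ IsMaximalRuns R rs ∧ rs.flatten = l := by
  constructor
  · rintro rfl
    exact ⟨isMaximalRuns_runs l, flatten_runs l⟩
  · rintro ⟨h, rfl⟩
    exact runs_flatten h

theorem runs_append_of_rel {r m s : List α} {ss : List (List α)} (hr : r ≠ [])
    (hc : r.IsChain R) (hm : runs R m = s :: ss) (hrel : R r.getLast! s.head!) :
    runs R (r ++ m) = (r ++ s) :: ss := by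
  obtain ⟨⟨hblocks, hbound⟩, hflat⟩ := runs_eq_iff.1 hm
  obtain ⟨hs, hsc⟩ := hblocks s mem_cons_self
  refine runs_eq_iff.2 ⟨⟨?_, hbound.cons_of_imp fun t ht => by rwa [getLast!_append r hs]⟩,
    by simp [← hflat]⟩
  rintro t (_ | ⟨_, ht⟩)
  · refine ⟨by simp [hr], hc.append hsc fun x hx y hy => ?_⟩
    rwa [← getLast!_of_getLast? hx, ← head!_of_head? hy]
  · exact hblocks t (mem_cons_of_mem _ ht)

end Runs

-- The second conjunct, that the first run ends no earlier than the first block, is the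
-- induction invariant: it transfers `r.head! < r₂.getLast!` to the run that starts with `r₂`.
theorem isChain_head!_lt_getLast!_runs_flatten {α : Type*} [LinearOrder α] [Inhabited α]
    {rs : List (List α)} (hblocks : ∀ r ∈ rs, r ≠ [] ∧ r.IsChain (· < ·))
    (hrs : rs.IsChain fun r s => r.head! < s.getLast!) :
    (runs (· < ·) rs.flatten).IsChain (fun r s => r.head! < s.getLast!) ∧
      ∀ s ∈ (runs (· < ·) rs.flatten).head?, rs.head!.getLast! ≤ s.getLast! := by
  induction rs with
  | nil => simp [runs]
  | cons r rest ih =>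
    obtain ⟨hr, hrc⟩ := hblocks r mem_cons_self
    obtain ⟨ihc, ihb⟩ := ih (fun s hs => hblocks s (mem_cons_of_mem _ hs)) hrs.of_cons
    rw [flatten_cons]
    rcases h : runs (· < ·) rest.flatten with _ | ⟨s, ss⟩
    · rw [runs_append_of_not_rel hr hrc (by simp [h]), h]
      simp
    rcases rest with _ | ⟨r2, rest⟩
    · simp [runs] at h
    rw [h] at ihc ihb
    have hlink : r.head! < r2.getLast! := hrs.rel
    have hr2s : r2.getLast! ≤ s.getLast! := ihb s rfl
    obtain ⟨hs, hsc⟩ := (isMaximalRuns_runs (R := (· < ·)) (r2 :: rest).flatten).1 s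
      (h ▸ mem_cons_self)
    by_cases hlt : r.getLast! < s.head!
    · rw [runs_append_of_rel hr hrc h hlt]
      refine ⟨ihc.cons_of_imp fun t ht => ?_, ?_⟩
      · rw [head!_append _ hr]
        exact (hrc.head!_le_getLast! hr).trans_lt (hlt.trans ht)
      · rintro _ ⟨⟩
        rw [getLast!_append r hs]
        exact hlt.le.trans (hsc.head!_le_getLast! hs)
    · rw [runs_append_of_not_rel hr hrc (by rw [h]; rintro _ ⟨⟩; exact hlt), h]
      exact ⟨ihc.cons_cons (hlink.trans_le hr2s), by simp⟩

theorem popStack_eq_flatten_map_reverse_runs (π : List ℕ) :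
    popStack π = ((runs (· > ·) π).map reverse).flatten := by
  rw [popStack, descRuns_eq_runs]

theorem popStack_perm (π : List ℕ) : popStack π ~ π := by
  conv_rhs => rw [← flatten_runs (R := (· > ·)) π]
  rw [popStack_eq_flatten_map_reverse_runs]
  simpa [flatMap_def] using Perm.flatMap_left (runs (· > ·) π) fun r _ => reverse_perm r

theorem isChain_ascRuns_popStack {π : List ℕ} (hπ : π.Nodup) :
    (ascRuns (popStack π)).IsChain fun r s => r.head! < s.getLast! := by
  obtain ⟨hblocks, hbound⟩ := isMaximalRuns_runs (R := (· > ·)) π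
  have hnd : (runs (· > ·) π).flatten.Nodup := (flatten_runs (R := (· > ·)) π).symm ▸ hπ
  have hstrict : (runs (· > ·) π).IsChain fun r s => r.getLast! < s.head! :=
    (hbound.and (isChain_getLast!_ne_head! (fun r hr => (hblocks r hr).1) hnd)).imp
      fun r s h => lt_of_le_of_ne (not_lt.1 h.1) h.2
  rw [ascRuns_eq_runs, popStack_eq_flatten_map_reverse_runs]
  refine (isChain_head!_lt_getLast!_runs_flatten ?_ ?_).1
  · simp only [mem_map]
    rintro _ ⟨r, hr, rfl⟩
    exact ⟨by simpa using (hblocks r hr).1, isChain_reverse.2 (hblocks r hr).2⟩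
  · rw [isChain_map]
    exact hstrict.imp fun r s h => by rwa [head!_reverse, getLast!_reverse]

theorem popStack_flatten_map_reverse_ascRuns {σ : List ℕ}
    (h : (ascRuns σ).IsChain fun r s => r.head! < s.getLast!) :
    popStack ((ascRuns σ).map reverse).flatten = σ := by
  obtain ⟨hblocks, -⟩ := isMaximalRuns_runs (R := (· < ·)) σ
  rw [ascRuns_eq_runs] at h ⊢
  have hdesc : runs (· > ·) ((runs (· < ·) σ).map reverse).flatten =
      (runs (· < ·) σ).map reverse := by
    refine runs_eq_iff.2 ⟨⟨?_, ?_⟩, rfl⟩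
    · simp only [mem_map]
      rintro _ ⟨r, hr, rfl⟩
      exact ⟨by simpa using (hblocks r hr).1, isChain_reverse.2 (hblocks r hr).2⟩
    · rw [isChain_map]
      exact h.imp fun r s hrs => by
        rw [getLast!_reverse, head!_reverse]
        exact not_lt.2 hrs.le
  rw [popStack_eq_flatten_map_reverse_runs, hdesc, map_map]
  simp [flatten_runs]

theorem isPopStacked_iff {n : ℕ} {σ : List ℕ} (hσ : IsPermOf n σ) :
    IsPopStacked n σ ↔ (ascRuns σ).IsChain fun r s => r.head! < s.getLast! := by
  constructor
  · rintro ⟨π, hπ, rfl⟩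
    exact isChain_ascRuns_popStack (hπ.nodup_iff.2 nodup_range')
  · intro h
    refine ⟨_, ?_, popStack_flatten_map_reverse_ascRuns h⟩
    exact (popStack_perm _).symm.trans (by rwa [popStack_flatten_map_reverse_ascRuns h])

section Ballots

variable {r : List ℕ}

theorem bmin_toFinset (hr : r ≠ []) (hc : r.IsChain (· < ·)) : bmin r.toFinset = r.head! :=
  IsLeast.csInf_eq
    ⟨by simpa using head!_mem_self hr, fun _ hx => hc.head!_le (by simpa using hx)⟩

theorem bmax_toFinset (hr : r ≠ []) (hc : r.IsChain (· < ·)) : bmax r.toFinset = r.getLast! :=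
  le_antisymm (Finset.sup_le fun _ hx => hc.le_getLast! (mem_toFinset.1 hx))
    (Finset.le_sup (f := id) (mem_toFinset.2 (getLast!_mem_self hr)))

theorem overlapping_map_toFinset_iff {rs : List (List ℕ)}
    (hrs : ∀ r ∈ rs, r ≠ [] ∧ r.IsChain (· < ·)) :
    Overlapping (rs.map toFinset) ↔
      rs.IsChain fun r s => s.head! < r.getLast! ∧ r.head! < s.getLast! :=
  (isChain_map toFinset).trans <| IsChain.iff_of_mem_imp fun r s hr hs => by
    rw [bmin_toFinset (hrs r hr).1 (hrs r hr).2, bmin_toFinset (hrs s hs).1 (hrs s hs).2,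
      bmax_toFinset (hrs r hr).1 (hrs r hr).2, bmax_toFinset (hrs s hs).1 (hrs s hs).2]

theorem foldr_union_map_toFinset (rs : List (List ℕ)) :
    (rs.map toFinset).foldr (· ∪ ·) ∅ = rs.flatten.toFinset := by
  induction rs with
  | nil => rfl
  | cons r rs ih => simp [ih]

theorem isBallot_map_toFinset_iff {U : Finset ℕ} {rs : List (List ℕ)}
    (hrs : ∀ r ∈ rs, r ≠ [] ∧ r.Nodup) :
    IsBallot U (rs.map toFinset) ↔ rs.flatten.Nodup ∧ rs.flatten.toFinset = U := by
  have hnonempty : ∀ B ∈ rs.map toFinset, B.Nonempty := by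
    simp only [mem_map]
    rintro _ ⟨r, hr, rfl⟩
    exact (toFinset_nonempty_iff r).2 (hrs r hr).1
  rw [IsBallot, foldr_union_map_toFinset, pairwise_map, nodup_flatten, and_assoc]
  simp only [disjoint_toFinset_iff_disjoint]
  exact ⟨fun h => ⟨fun r hr => (hrs r hr).2, h.2⟩, fun h => ⟨hnonempty, h.2⟩⟩

theorem isPermOf_iff {n : ℕ} {l : List ℕ} :
    IsPermOf n l ↔ l.Nodup ∧ l.toFinset = Finset.Icc 1 n := by
  have hrange : (range' 1 n).toFinset = Finset.Icc 1 n := by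
    ext
    simp
    omega
  exact ⟨fun h => ⟨h.nodup_iff.2 nodup_range', hrange ▸ toFinset_eq_of_perm _ _ h⟩,
    fun h => perm_of_nodup_nodup_toFinset_eq h.1 nodup_range' (h.2.trans hrange.symm)⟩

theorem sort_toFinset_of_isChain (hc : r.IsChain (· < ·)) : r.toFinset.sort = r :=
  (toFinset_sort _ hc.pairwise.nodup).2 (hc.pairwise.imp le_of_lt)

theorem map_sort_map_toFinset {rs : List (List ℕ)} (hrs : ∀ r ∈ rs, r.IsChain (· < ·)) :
    (rs.map toFinset).map (fun B => B.sort) = rs := by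
  rw [map_map]
  refine (map_congr_left ?_).trans (map_id rs)
  exact fun r hr => sort_toFinset_of_isChain (hrs r hr)

theorem map_toFinset_map_sort (l : List (Finset ℕ)) :
    (l.map fun B => B.sort).map toFinset = l := by
  simp [Function.comp_def]

theorem ne_nil_and_isChain_of_mem_map_sort {l : List (Finset ℕ)} (hl : ∀ B ∈ l, B.Nonempty) :
    ∀ r ∈ l.map (fun B => B.sort), r ≠ [] ∧ r.IsChain (· < ·) := by
  simp only [mem_map]
  rintro _ ⟨B, hB, rfl⟩
  exact ⟨ne_nil_of_length_pos (by simpa using (hl B hB).card_pos), B.sortedLT_sort.isChain⟩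

end Ballots

theorem isBallot_overlapping_map_toFinset_ascRuns {n : ℕ} {σ : List ℕ} (hσ : IsPermOf n σ)
    (hpop : IsPopStacked n σ) :
    IsBallot (Finset.Icc 1 n) ((ascRuns σ).map toFinset) ∧
      Overlapping ((ascRuns σ).map toFinset) := by
  obtain ⟨hblocks, hbound⟩ := isMaximalRuns_runs (R := (· < ·)) σ
  rw [← ascRuns_eq_runs] at hblocks hbound
  have hflat : (ascRuns σ).flatten = σ := by rw [ascRuns_eq_runs, flatten_runs]
  have hnodup := isPermOf_iff.1 hσ
  rw [← hflat] at hnodup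
  refine ⟨(isBallot_map_toFinset_iff fun r hr =>
      ⟨(hblocks r hr).1, (hblocks r hr).2.pairwise.nodup⟩).2 hnodup,
    (overlapping_map_toFinset_iff hblocks).2 ?_⟩
  have hne := isChain_getLast!_ne_head! (fun r hr => (hblocks r hr).1) hnodup.1
  exact ((hbound.and hne).and ((isPopStacked_iff hσ).1 hpop)).imp fun r s h =>
    ⟨lt_of_le_of_ne (not_lt.1 h.1.1) h.1.2.symm, h.2⟩

theorem ascRuns_flatten_map_sort {l : List (Finset ℕ)} (hl : ∀ B ∈ l, B.Nonempty)
    (ho : Overlapping l) :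
    ascRuns (l.map fun B => B.sort).flatten = l.map fun B => B.sort := by
  have hch := (overlapping_map_toFinset_iff (ne_nil_and_isChain_of_mem_map_sort hl)).1
    ((map_toFinset_map_sort l).symm ▸ ho)
  rw [ascRuns_eq_runs, runs_eq_iff]
  exact ⟨⟨ne_nil_and_isChain_of_mem_map_sort hl, hch.imp fun r s h => not_lt.2 h.1.le⟩, rfl⟩

theorem isPermOf_isPopStacked_flatten_map_sort {n : ℕ} {l : List (Finset ℕ)}
    (hb : IsBallot (Finset.Icc 1 n) l) (ho : Overlapping l) :
    IsPermOf n (l.map fun B => B.sort).flatten ∧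
      IsPopStacked n (l.map fun B => B.sort).flatten := by
  have hrs := ne_nil_and_isChain_of_mem_map_sort hb.1
  have hperm : IsPermOf n (l.map fun B => B.sort).flatten :=
    isPermOf_iff.2 ((isBallot_map_toFinset_iff fun r hr =>
      ⟨(hrs r hr).1, (hrs r hr).2.pairwise.nodup⟩).1 ((map_toFinset_map_sort l).symm ▸ hb))
  have hch := (overlapping_map_toFinset_iff hrs).1 ((map_toFinset_map_sort l).symm ▸ ho)
  refine ⟨hperm, (isPopStacked_iff hperm).2 ?_⟩
  rw [ascRuns_flatten_map_sort hb.1 ho]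
  exact hch.imp fun r s h => h.2

theorem flatten_map_sort_map_toFinset_ascRuns (σ : List ℕ) :
    (((ascRuns σ).map toFinset).map fun B => B.sort).flatten = σ := by
  obtain ⟨hblocks, -⟩ := isMaximalRuns_runs (R := (· < ·)) σ
  rw [ascRuns_eq_runs, map_sort_map_toFinset fun r hr => (hblocks r hr).2, flatten_runs]

/-- sending a pop-stacked permutation of `[n]` to its sequence of
ascending runs (as sets, in order) is a bijection onto overlapping ballots of `[n]`. -/
theorem statement2 (n : ℕ) :
    ∃ e : {σ : List ℕ // IsPermOf n σ ∧ IsPopStacked n σ} ≃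
          {l : List (Finset ℕ) // IsBallot (Finset.Icc 1 n) l ∧ Overlapping l},
      ∀ σ, (e σ : List (Finset ℕ)) = (ascRuns σ.1).map List.toFinset :=
  ⟨{ toFun := fun σ => ⟨(ascRuns σ.1).map toFinset,
        isBallot_overlapping_map_toFinset_ascRuns σ.2.1 σ.2.2⟩
     invFun := fun l => ⟨(l.1.map fun B : Finset ℕ => B.sort).flatten,
        isPermOf_isPopStacked_flatten_map_sort l.2.1 l.2.2⟩
     left_inv := fun σ => Subtype.ext (flatten_map_sort_map_toFinset_ascRuns σ.1)
     right_inv := fun l => Subtype.ext <| by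
        dsimp only
        rw [ascRuns_flatten_map_sort l.2.1.1 l.2.2, map_toFinset_map_sort] },
    fun _ => rfl⟩
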